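/- For any two density matrices ρ0, ρ1 on a finite-dimensional complex Hilbert space, there exists a PVM {E_α} (a finite family of mutually orthogonal projection operators with Σ_α E_α = 1) such that F(ρ0, ρ1) = Σ_α √( tr(ρ0 E_α) · tr(ρ1 E_α) ); hence the minimum over all POVMs of the Bhattacharyya overlap Σ_α √(p0(α) p1(α)) equals the fidelity and is attained by a projection valued measure. -/

import Mathlib

open Matrix Kronecker
open scoped ComplexOrder

-- Positive semidefinite square root (zero if not PSD).
open Classical in
noncomputable def psqrt {n : Type*} [Fintype n] [DecidableEq n] (A : Matrix n n ℂ) :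
    Matrix n n ℂ :=
  if h : A.PosSemidef then
    (h.1.eigenvectorUnitary : Matrix n n ℂ) *
      diagonal ((↑) ∘ (Real.sqrt ·) ∘ h.1.eigenvalues) *
      (star h.1.eigenvectorUnitary : Matrix n n ℂ)
  else 0

/-- Fidelity F(ρ0,ρ1) = tr √(√ρ0 ρ1 √ρ0). -/
noncomputable def fidelity {n : Type*} [Fintype n] [DecidableEq n] (ρ0 ρ1 : Matrix n n ℂ) : ℝ :=
  (psqrt (psqrt ρ0 * ρ1 * psqrt ρ0)).trace.re

/-- Operator (ℓ²→ℓ²) norm of a matrix. -/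
noncomputable def opNorm {n : Type*} [Fintype n] [DecidableEq n] (A : Matrix n n ℂ) : ℝ :=
  ‖LinearMap.toContinuousLinearMap (Matrix.toEuclideanLin A)‖

/-- Partial trace over the right (second) factor. -/
noncomputable def ptraceRight {m n : Type*} [Fintype m] [Fintype n]
    (ρ : Matrix (m × n) (m × n) ℂ) : Matrix m m ℂ :=
  Matrix.of fun i j => ∑ k, ρ (i, k) (j, k)

/-- Partial trace over the left (first) factor. -/
noncomputable def ptraceLeft {m n : Type*} [Fintype m] [Fintype n]
    (ρ : Matrix (m × n) (m × n) ℂ) : Matrix n n ℂ :=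
  Matrix.of fun i j => ∑ k, ρ (k, i) (k, j)

/-!
Write `S = √ρ₀`, `R = √ρ₁` and `T = √(S ρ₁ S)`, so that `F(ρ₀, ρ₁) = tr T`. With `T⁺` the
pseudo-inverse of `T`, the matrix `W = T⁺ S R` satisfies `W Wᴴ = T T⁺ ≤ 1` and
`tr T = tr (R S W) = ∑ α, tr (R E_α S W)` for every POVM `E`; Cauchy–Schwarz for `tr (Xᴴ Y)` with
`X = √E_α R` and `Y = √E_α S W` bounds the `α`-th term by `√(p₀(α) p₁(α))`.

Equality is attained as in Fuchs–Caves: with `P = S S⁺` the support projection of `ρ₀` and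
`N = S⁺ T S⁺`, one has `N ρ₀ N = P ρ₁ P` and `tr (ρ₀ N) = tr T`. Measure in an orthonormal
eigenbasis of `M = N - (1 - P)`. An eigenvector `v` with eigenvalue `μ` lies either in `ker P`, and
then `p₀ = 0`, or in the range of `P`, and then `p₁ = μ² p₀` with `μ ≥ 0`. Either way
`√(p₀ p₁) = μ p₀`, and these sum to `tr (ρ₀ M) = tr (ρ₀ N) = tr T`.
-/

open scoped MatrixOrder

namespace Matrix

section psqrt

variable {n : Type*} [Fintype n] [DecidableEq n] {A : Matrix n n ℂ}

theorem psqrt_eq_cfcSqrt (hA : A.PosSemidef) : psqrt A = CFC.sqrt A := by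
  rw [CFC.sqrt_eq_real_sqrt A hA.nonneg, cfcₙ_eq_cfc, hA.isHermitian.cfc_eq, psqrt, dif_pos hA,
    IsHermitian.cfc, Unitary.conjStarAlgAut_apply]
  rfl

theorem posSemidef_psqrt (hA : A.PosSemidef) : (psqrt A).PosSemidef := by
  rw [psqrt_eq_cfcSqrt hA, ← nonneg_iff_posSemidef]
  exact CFC.sqrt_nonneg A

theorem psqrt_mul_psqrt (hA : A.PosSemidef) : psqrt A * psqrt A = A := by
  rw [psqrt_eq_cfcSqrt hA, CFC.sqrt_mul_sqrt_self A hA.nonneg]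

theorem posSemidef_psqrt_mul_mul_psqrt {B : Matrix n n ℂ} (hA : A.PosSemidef)
    (hB : B.PosSemidef) : (psqrt A * B * psqrt A).PosSemidef := by
  simpa only [(posSemidef_psqrt hA).isHermitian.eq] using hB.mul_mul_conjTranspose_same (psqrt A)

end psqrt

section traceInequalities

variable {n 𝕜 : Type*} [Fintype n] [RCLike 𝕜]

theorem norm_trace_conjTranspose_mul_le (X Y : Matrix n n 𝕜) :
    ‖(Xᴴ * Y).trace‖ ≤ √(RCLike.re (Xᴴ * X).trace) * √(RCLike.re (Yᴴ * Y).trace) := by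
  classical
  let := toMatrixSeminormedAddCommGroup (1 : Matrix n n 𝕜) PosSemidef.one
  let := toMatrixInnerProductSpace (1 : Matrix n n 𝕜) PosSemidef.one
  have hinner (Z W : Matrix n n 𝕜) : inner 𝕜 Zᴴ Wᴴ = (Wᴴ * Z).trace := by
    change (Wᴴ * 1 * Zᴴᴴ).trace = _
    rw [mul_one, conjTranspose_conjTranspose]
  have h := norm_inner_le_norm (𝕜 := 𝕜) Yᴴ Xᴴ
  rw [norm_eq_sqrt_re_inner (𝕜 := 𝕜) Xᴴ, norm_eq_sqrt_re_inner (𝕜 := 𝕜) Yᴴ, mul_comm] at h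
  simpa only [hinner] using h

variable [DecidableEq n]

theorem re_trace_mul_mul_conjTranspose_le {C : Matrix n n 𝕜} (hC : C ≤ 1) (Z : Matrix n n 𝕜) :
    RCLike.re (Z * C * Zᴴ).trace ≤ RCLike.re (Z * Zᴴ).trace := by
  have h1C : (1 - C).PosSemidef := nonneg_iff_posSemidef.mp (sub_nonneg.mpr hC)
  have h := (RCLike.nonneg_iff.mp (h1C.mul_mul_conjTranspose_same Z).trace_nonneg).1
  rwa [mul_sub, sub_mul, mul_one, trace_sub, map_sub, sub_nonneg] at h

theorem re_trace_mul_le_sqrt {E R S W : Matrix n n 𝕜} (hE : E.PosSemidef) (hR : R.IsHermitian)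
    (hS : S.IsHermitian) (hW : W * Wᴴ ≤ 1) :
    RCLike.re (R * E * S * W).trace ≤
      √(RCLike.re (R * R * E).trace * RCLike.re (S * S * E).trace) := by
  obtain ⟨F, hF, hFF⟩ : ∃ F : Matrix n n 𝕜, F.IsHermitian ∧ F * F = E :=
    ⟨CFC.sqrt E, (CFC.sqrt_nonneg E).isSelfAdjoint, CFC.sqrt_mul_sqrt_self E hE.nonneg⟩
  set X := F * R
  set Y := F * S * W
  have hXY : Xᴴ * Y = R * E * S * W := by
    simp only [X, Y, conjTranspose_mul, hF.eq, hR.eq, ← hFF, mul_assoc]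
  have hXX : (Xᴴ * X).trace = (R * R * E).trace := by
    rw [show Xᴴ * X = R * E * R by simp only [X, conjTranspose_mul, hF.eq, hR.eq, ← hFF, mul_assoc],
      trace_mul_comm, ← mul_assoc]
  have hYY : RCLike.re (Yᴴ * Y).trace ≤ RCLike.re (S * S * E).trace := by
    have hY : (Yᴴ * Y).trace = (F * S * (W * Wᴴ) * (F * S)ᴴ).trace := by
      rw [show Y = F * S * W from rfl, conjTranspose_mul, trace_mul_comm]
      simp only [mul_assoc]
    have hFS : (F * S * (F * S)ᴴ).trace = (S * S * E).trace := by
      rw [conjTranspose_mul, hF.eq, hS.eq, ← hFF, mul_assoc, trace_mul_comm]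
      simp only [mul_assoc]
    exact hY ▸ hFS ▸ re_trace_mul_mul_conjTranspose_le hW (F * S)
  have hX0 : 0 ≤ RCLike.re (Xᴴ * X).trace :=
    (RCLike.nonneg_iff.mp (posSemidef_conjTranspose_mul_self X).trace_nonneg).1
  calc RCLike.re (R * E * S * W).trace ≤ ‖(Xᴴ * Y).trace‖ := hXY ▸ RCLike.re_le_norm _
    _ ≤ √(RCLike.re (Xᴴ * X).trace) * √(RCLike.re (Yᴴ * Y).trace) :=
      norm_trace_conjTranspose_mul_le X Y
    _ ≤ √(RCLike.re (Xᴴ * X).trace) * √(RCLike.re (S * S * E).trace) := by gcongr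
    _ = √(RCLike.re (R * R * E).trace * RCLike.re (S * S * E).trace) := by
      rw [← Real.sqrt_mul hX0, hXX]

end traceInequalities

section pinv

variable {n 𝕜 : Type*} [Fintype n] [RCLike 𝕜]

theorem isStarProjection_mul_of_pinv {A B : Matrix n n 𝕜} (hA : A.IsHermitian)
    (hB : B.IsHermitian) (hAB : Commute A B) (hABA : A * B * A = A) :
    IsStarProjection (A * B) where
  isIdempotentElem := by rw [IsIdempotentElem, ← mul_assoc, hABA]
  isSelfAdjoint := by rw [IsSelfAdjoint, star_mul, hA.star_eq, hB.star_eq, hAB.eq]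

variable [DecidableEq n]

theorem IsHermitian.mul_eq_self_of_mul_self_eq {S T P X : Matrix n n 𝕜} (hS : S.IsHermitian)
    (hT : T.IsHermitian) (hSP : S * P = S) (hTT : T * T = S * X * S) : T * P = T := by
  have hTQ : T * (1 - P) = 0 := by
    refine conjTranspose_mul_self_eq_zero.mp ?_
    have hSQ : S * (1 - P) = 0 := by rw [mul_sub, mul_one, hSP, sub_self]
    calc (T * (1 - P))ᴴ * (T * (1 - P)) = (1 - P)ᴴ * (T * T) * (1 - P) := by
          rw [conjTranspose_mul, hT.eq]
          simp only [mul_assoc]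
      _ = (S * (1 - P))ᴴ * X * (S * (1 - P)) := by
          rw [hTT, conjTranspose_mul, hS.eq]
          simp only [mul_assoc]
      _ = 0 := by rw [hSQ, conjTranspose_zero, zero_mul, zero_mul]
  rwa [mul_sub, mul_one, sub_eq_zero, eq_comm] at hTQ

theorem IsHermitian.exists_pinv {A : Matrix n n 𝕜} (hA : A.IsHermitian) :
    ∃ B : Matrix n n 𝕜, B.IsHermitian ∧ Commute A B ∧ A * B * A = A ∧ B * A * B = B := by
  have hmul (f g : ℝ → ℝ) : cfc f A * cfc g A = cfc (fun t => f t * g t) A :=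
    (cfc_mul f g A (A.finite_real_spectrum.continuousOn f)
      (A.finite_real_spectrum.continuousOn g)).symm
  have hid : cfc (fun t : ℝ => t) A = A := cfc_id' ℝ A hA.isSelfAdjoint
  have hmul_left (f : ℝ → ℝ) : A * cfc f A = cfc (fun t => t * f t) A := by
    rw [← hmul, hid]
  have hmul_right (f : ℝ → ℝ) : cfc f A * A = cfc (fun t => f t * t) A := by
    rw [← hmul, hid]
  refine ⟨cfc (fun t : ℝ => t⁻¹) A, (cfc_predicate _ A : IsSelfAdjoint _), ?_, ?_, ?_⟩
  · simp only [Commute, SemiconjBy, hmul_left, hmul_right, mul_comm]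
  · rw [hmul_left, hmul_right]
    exact (cfc_congr fun t _ => mul_inv_mul_cancel t).trans hid
  · rw [hmul_right, hmul]
    exact cfc_congr fun t _ => by simpa using mul_inv_mul_cancel t⁻¹

end pinv

section pvm

variable {n 𝕜 : Type*} [Fintype n] [RCLike 𝕜]

theorem trace_mul_vecMulVec_star (X : Matrix n n 𝕜) (v : n → 𝕜) :
    (X * vecMulVec v (star v)).trace = star v ⬝ᵥ (X *ᵥ v) := by
  rw [mul_vecMulVec, trace_vecMulVec, dotProduct_comm]

variable [DecidableEq n]

structure IsPVM {ι : Type*} [Fintype ι] (E : ι → Matrix n n 𝕜) : Prop where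
  isHermitian : ∀ α, (E α).IsHermitian
  mul_self : ∀ α, E α * E α = E α
  mul_eq_zero : ∀ α β, α ≠ β → E α * E β = 0
  sum_eq_one : ∑ α, E α = 1

theorem IsPVM.comp_equiv {ι κ : Type*} [Fintype ι] [Fintype κ] {E : ι → Matrix n n 𝕜}
    (hE : IsPVM E) (e : κ ≃ ι) : IsPVM (E ∘ e) where
  isHermitian α := hE.isHermitian (e α)
  mul_self α := hE.mul_self (e α)
  mul_eq_zero α β h := hE.mul_eq_zero _ _ (e.injective.ne h)
  sum_eq_one := by rw [← hE.sum_eq_one]; exact e.sum_comp E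

theorem _root_.OrthonormalBasis.star_dotProduct (b : OrthonormalBasis n 𝕜 (EuclideanSpace 𝕜 n))
    (i j : n) : star ⇑(b i) ⬝ᵥ ⇑(b j) = if i = j then 1 else 0 := by
  rw [dotProduct_comm, ← EuclideanSpace.inner_eq_star_dotProduct,
    orthonormal_iff_ite.mp b.orthonormal]

theorem _root_.OrthonormalBasis.isPVM_vecMulVec (b : OrthonormalBasis n 𝕜 (EuclideanSpace 𝕜 n)) :
    IsPVM fun i => vecMulVec ⇑(b i) (star ⇑(b i)) where
  isHermitian i := by rw [IsHermitian, conjTranspose_vecMulVec, star_star]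
  mul_self i := by rw [vecMulVec_mul_vecMulVec, b.star_dotProduct, if_pos rfl, one_smul]
  mul_eq_zero i j hij := by
    rw [vecMulVec_mul_vecMulVec, b.star_dotProduct, if_neg hij, zero_smul, vecMulVec_zero]
  sum_eq_one := by
    refine ext_iff_mulVec.mpr fun x => ?_
    have h := congrArg WithLp.ofLp (b.sum_repr' (WithLp.toLp 2 x))
    simp only [EuclideanSpace.inner_eq_star_dotProduct] at h
    simp only [sum_mulVec, vecMulVec_mulVec, one_mulVec, op_smul_eq_smul]
    simpa only [WithLp.ofLp_sum, WithLp.ofLp_smul, dotProduct_comm x] using h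

end pvm

section fuchsCaves

variable {n 𝕜 : Type*} [Fintype n] [RCLike 𝕜]

theorem PosSemidef.eq_zero_of_mulVec_eq_neg {N : Matrix n n 𝕜} (hN : N.PosSemidef) {w : n → 𝕜}
    (h : N *ᵥ w = -w) : w = 0 := by
  have hw := hN.dotProduct_mulVec_nonneg w
  rw [h, dotProduct_neg, neg_nonneg] at hw
  exact dotProduct_star_self_eq_zero.mp (le_antisymm hw (dotProduct_star_self_nonneg w))

theorem IsHermitian.dotProduct_mul_mul_mulVec {H : Matrix n n 𝕜} (hH : H.IsHermitian)
    (X : Matrix n n 𝕜) (v : n → 𝕜) :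
    star v ⬝ᵥ ((H * X * H) *ᵥ v) = star (H *ᵥ v) ⬝ᵥ (X *ᵥ (H *ᵥ v)) := by
  rw [star_mulVec, hH.eq, ← dotProduct_mulVec, mulVec_mulVec, mulVec_mulVec]

variable [DecidableEq n]

-- `N = S⁺ T S⁺` and `P = S S⁺`, where `S⁺` is the pseudo-inverse of `S`.
theorem exists_fuchsCaves_operator {ρ0 ρ1 S T : Matrix n n 𝕜} (hS : S.IsHermitian)
    (hT : T.PosSemidef) (hSS : S * S = ρ0) (hTT : T * T = S * ρ1 * S) :
    ∃ N P : Matrix n n 𝕜, N.PosSemidef ∧ IsStarProjection P ∧ ρ0 * P = ρ0 ∧ N * P = N ∧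
      N * ρ0 * N = P * ρ1 * P ∧ (ρ0 * N).trace = T.trace := by
  obtain ⟨B, hB, hSB, hSBS, hBSB⟩ := hS.exists_pinv
  have hP := isStarProjection_mul_of_pinv hS hB hSB hSBS
  have hSP : S * (S * B) = S := by rw [hSB.eq, ← mul_assoc, hSBS]
  have hTP : T * (S * B) = T := hS.mul_eq_self_of_mul_self_eq hT.isHermitian hSP hTT
  have hPT : S * B * T = T := by
    have h := congrArg conjTranspose hTP
    rwa [conjTranspose_mul, conjTranspose_mul, hT.isHermitian.eq, hB.eq, hS.eq, ← hSB.eq] at h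
  refine ⟨B * T * B, S * B, ?_, hP, ?_, ?_, ?_, ?_⟩
  · simpa only [hB.eq] using hT.mul_mul_conjTranspose_same B
  · rw [← hSS, mul_assoc, hSP]
  · rw [mul_assoc, ← mul_assoc B, hBSB]
  · calc B * T * B * ρ0 * (B * T * B) = B * (T * (B * S)) * ((S * B) * T) * B := by
          rw [← hSS]; simp only [mul_assoc]
      _ = B * (T * T) * B := by rw [← hSB.eq, hTP, hPT]; simp only [mul_assoc]
      _ = S * B * ρ1 * (S * B) := by
          rw [hTT]
          simp only [← mul_assoc]
          rw [← hSB.eq]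
  · rw [← hSS, show S * S * (B * T * B) = S * S * (B * T) * B by simp only [mul_assoc],
      trace_mul_comm, show B * (S * S * (B * T)) = B * S * (S * B) * T by simp only [mul_assoc],
      ← hSB.eq, hP.isIdempotentElem.eq, hPT]

-- `-1` is not an eigenvalue of `N ≥ 0`, so no eigenvector of `N - (1 - P)` mixes `ker P` and
-- `range P`.
theorem mulVec_eq_zero_or_of_mulVec_sub_eq {N P : Matrix n n 𝕜} {v : n → 𝕜} {μ : ℝ}
    (hN : N.PosSemidef) (hP : IsStarProjection P) (hNP : N * P = N)
    (hv : (N - (1 - P)) *ᵥ v = μ • v) : P *ᵥ v = 0 ∨ (P *ᵥ v = v ∧ N *ᵥ v = μ • v) := by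
  have hPN : P * N = N := by
    have hPh : P.IsHermitian := hP.isSelfAdjoint
    simpa only [conjTranspose_mul, hN.isHermitian.eq, hPh.eq] using congrArg conjTranspose hNP
  have hPM : P * (N - (1 - P)) = N := by
    rw [mul_sub, mul_sub, mul_one, hPN, hP.isIdempotentElem.eq, sub_self, sub_zero]
  have hNv : N *ᵥ v = μ • (P *ᵥ v) := by rw [← hPM, ← mulVec_mulVec, hv, mulVec_smul]
  by_cases hμ : μ = -1
  · left
    refine hN.eq_zero_of_mulVec_eq_neg ?_
    rw [mulVec_mulVec, hNP, hNv, hμ, neg_one_smul]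
  · right
    have hQM : (1 - P) * (N - (1 - P)) = -(1 - P) := by
      rw [mul_sub, sub_mul, one_mul, hPN, sub_self, zero_sub, hP.one_sub.isIdempotentElem.eq]
    have hQv : (μ + 1) • ((1 - P) *ᵥ v) = 0 := by
      rw [add_smul, one_smul, ← mulVec_smul, ← hv, mulVec_mulVec, hQM, neg_mulVec, neg_add_cancel]
    have hPv : P *ᵥ v = v := by
      rw [smul_eq_zero, sub_mulVec, one_mulVec, sub_eq_zero] at hQv
      exact (hQv.resolve_left fun h => hμ (eq_neg_of_add_eq_zero_left h)).symm
    exact ⟨hPv, by rw [hNv, hPv]⟩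

theorem sqrt_re_mul_re_eq_of_mulVec_sub_eq {ρ0 ρ1 N P : Matrix n n 𝕜} {v : n → 𝕜} {μ : ℝ}
    (h0 : ρ0.PosSemidef) (hN : N.PosSemidef) (hP : IsStarProjection P) (hρP : ρ0 * P = ρ0)
    (hNP : N * P = N) (hNρN : N * ρ0 * N = P * ρ1 * P) (hv1 : star v ⬝ᵥ v = 1)
    (hv : (N - (1 - P)) *ᵥ v = μ • v) :
    √(RCLike.re (star v ⬝ᵥ (ρ0 *ᵥ v)) * RCLike.re (star v ⬝ᵥ (ρ1 *ᵥ v))) =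
      μ * RCLike.re (star v ⬝ᵥ (ρ0 *ᵥ v)) := by
  rcases mulVec_eq_zero_or_of_mulVec_sub_eq hN hP hNP hv with hPv | ⟨hPv, hNv⟩
  · rw [← hρP, ← mulVec_mulVec, hPv, mulVec_zero]
    simp
  · have hp1 : star v ⬝ᵥ (ρ1 *ᵥ v) = (μ : 𝕜) ^ 2 * (star v ⬝ᵥ (ρ0 *ᵥ v)) := by
      have hPh : P.IsHermitian := hP.isSelfAdjoint
      calc star v ⬝ᵥ (ρ1 *ᵥ v) = star v ⬝ᵥ ((N * ρ0 * N) *ᵥ v) := by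
            rw [hNρN, hPh.dotProduct_mul_mul_mulVec, hPv]
        _ = (μ : 𝕜) ^ 2 * (star v ⬝ᵥ (ρ0 *ᵥ v)) := by
            rw [hN.isHermitian.dotProduct_mul_mul_mulVec, hNv, star_smul, star_trivial,
              mulVec_smul, dotProduct_smul, smul_dotProduct, RCLike.real_smul_eq_coe_mul,
              RCLike.real_smul_eq_coe_mul]
            ring
    have hμ : 0 ≤ μ := by
      have h := hN.re_dotProduct_nonneg v
      rwa [hNv, dotProduct_smul, hv1, RCLike.real_smul_eq_coe_mul, mul_one, RCLike.ofReal_re] at h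
    have hp0 : 0 ≤ RCLike.re (star v ⬝ᵥ (ρ0 *ᵥ v)) := h0.re_dotProduct_nonneg v
    rw [hp1, ← RCLike.ofReal_pow, RCLike.re_ofReal_mul, ← Real.sqrt_sq (mul_nonneg hμ hp0)]
    congr 1
    ring

end fuchsCaves

end Matrix

open Matrix

section overlap

variable {n ι : Type*} [Fintype n] [DecidableEq n] [Fintype ι]

noncomputable def bhattacharyyaOverlap (ρ0 ρ1 : Matrix n n ℂ) (E : ι → Matrix n n ℂ) : ℝ :=
  ∑ α, √((ρ0 * E α).trace.re * (ρ1 * E α).trace.re)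

theorem re_trace_le_bhattacharyyaOverlap {ρ0 ρ1 S R T : Matrix n n ℂ} (hS : S.IsHermitian)
    (hR : R.IsHermitian) (hT : T.IsHermitian) (hSS : S * S = ρ0) (hRR : R * R = ρ1)
    (hTT : T * T = S * ρ1 * S) {E : ι → Matrix n n ℂ} (hE : ∀ α, (E α).PosSemidef)
    (hsum : ∑ α, E α = 1) : T.trace.re ≤ bhattacharyyaOverlap ρ0 ρ1 E := by
  obtain ⟨B, hB, hTB, hTBT, -⟩ := hT.exists_pinv
  have hW : B * S * R * (B * S * R)ᴴ ≤ 1 := by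
    have hWW : B * S * R * (B * S * R)ᴴ = T * B := by
      calc _ = B * (S * (R * R) * S) * B := by
            simp only [conjTranspose_mul, hB.eq, hS.eq, hR.eq, mul_assoc]
        _ = T * B * T * B := by
            rw [hRR, ← hTT, ← mul_assoc B T T, ← hTB.eq]
        _ = T * B := by rw [hTBT]
    exact hWW ▸ (isStarProjection_mul_of_pinv hT hB hTB hTBT).le_one
  have htr : T.trace = ∑ α, (R * E α * S * (B * S * R)).trace := by
    calc T.trace = (B * (T * T)).trace := by rw [← mul_assoc, ← hTB.eq, hTBT]
      _ = (S * R * (R * S * B)).trace := by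
        rw [hTT, ← hRR, trace_mul_comm]
        simp only [mul_assoc]
      _ = (R * S * (B * S * R)).trace := by
        rw [trace_mul_comm]
        simp only [mul_assoc]
      _ = ∑ α, (R * E α * S * (B * S * R)).trace := by
        rw [← trace_sum, ← Finset.sum_mul, ← Finset.sum_mul, ← Finset.mul_sum, hsum, mul_one]
  calc T.trace.re = ∑ α, (R * E α * S * (B * S * R)).trace.re := by rw [htr, Complex.re_sum]
    _ ≤ ∑ α, √((R * R * E α).trace.re * (S * S * E α).trace.re) :=
      Finset.sum_le_sum fun α _ => re_trace_mul_le_sqrt (hE α) hR hS hW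
    _ = bhattacharyyaOverlap ρ0 ρ1 E := by
      simp only [hSS, hRR, bhattacharyyaOverlap, mul_comm]

theorem exists_isPVM_re_trace_eq_bhattacharyyaOverlap {ρ0 ρ1 S T : Matrix n n ℂ}
    (h0 : ρ0.PosSemidef) (hS : S.IsHermitian) (hT : T.PosSemidef) (hSS : S * S = ρ0)
    (hTT : T * T = S * ρ1 * S) :
    ∃ E : n → Matrix n n ℂ, IsPVM E ∧ T.trace.re = bhattacharyyaOverlap ρ0 ρ1 E := by
  obtain ⟨N, P, hN, hP, hρP, hNP, hNρN, htr⟩ := exists_fuchsCaves_operator hS hT hSS hTT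
  have hM : (N - (1 - P)).IsHermitian := hN.isHermitian.sub hP.one_sub.isSelfAdjoint
  set b := hM.eigenvectorBasis
  refine ⟨_, b.isPVM_vecMulVec, ?_⟩
  have hρQ : ρ0 * (1 - P) = 0 := by rw [mul_sub, mul_one, hρP, sub_self]
  calc T.trace.re = (ρ0 * (N - (1 - P))).trace.re := by rw [mul_sub, hρQ, sub_zero, htr]
    _ = ∑ i, (ρ0 * (N - (1 - P)) * vecMulVec ⇑(b i) (star ⇑(b i))).trace.re := by
      rw [← Complex.re_sum, ← trace_sum, ← Finset.mul_sum, b.isPVM_vecMulVec.sum_eq_one, mul_one]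
    _ = bhattacharyyaOverlap ρ0 ρ1 fun i => vecMulVec ⇑(b i) (star ⇑(b i)) := by
      refine Finset.sum_congr rfl fun i _ => ?_
      rw [trace_mul_vecMulVec_star, trace_mul_vecMulVec_star, trace_mul_vecMulVec_star,
        ← mulVec_mulVec, hM.mulVec_eigenvectorBasis, mulVec_smul, dotProduct_smul,
        Complex.real_smul, Complex.re_ofReal_mul]
      exact (sqrt_re_mul_re_eq_of_mulVec_sub_eq h0 hN hP hρP hNP hNρN
        (by rw [b.star_dotProduct, if_pos rfl]) (hM.mulVec_eigenvectorBasis i)).symm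

theorem fidelity_le_bhattacharyyaOverlap {ρ0 ρ1 : Matrix n n ℂ} (h0 : ρ0.PosSemidef)
    (h1 : ρ1.PosSemidef) {E : ι → Matrix n n ℂ} (hE : ∀ α, (E α).PosSemidef)
    (hsum : ∑ α, E α = 1) : fidelity ρ0 ρ1 ≤ bhattacharyyaOverlap ρ0 ρ1 E := by
  have hT := posSemidef_psqrt_mul_mul_psqrt h0 h1
  exact re_trace_le_bhattacharyyaOverlap (posSemidef_psqrt h0).isHermitian
    (posSemidef_psqrt h1).isHermitian (posSemidef_psqrt hT).isHermitian (psqrt_mul_psqrt h0)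
    (psqrt_mul_psqrt h1) (psqrt_mul_psqrt hT) hE hsum

theorem exists_isPVM_fidelity_eq {ρ0 ρ1 : Matrix n n ℂ} (h0 : ρ0.PosSemidef)
    (h1 : ρ1.PosSemidef) :
    ∃ E : n → Matrix n n ℂ, IsPVM E ∧ fidelity ρ0 ρ1 = bhattacharyyaOverlap ρ0 ρ1 E := by
  have hT := posSemidef_psqrt_mul_mul_psqrt h0 h1
  exact exists_isPVM_re_trace_eq_bhattacharyyaOverlap h0 (posSemidef_psqrt h0).isHermitian
    (posSemidef_psqrt hT) (psqrt_mul_psqrt h0) (psqrt_mul_psqrt hT)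

end overlap

theorem fidelity_eq_min_overlap_attained_by_pvm_general {n : Type*} [Fintype n] [DecidableEq n]
    (ρ0 ρ1 : Matrix n n ℂ) (h0 : ρ0.PosSemidef)
    (h1 : ρ1.PosSemidef) :
    (∃ (k : ℕ) (E : Fin k → Matrix n n ℂ),
      (∀ α, (E α)ᴴ = E α) ∧ (∀ α, E α * E α = E α) ∧
      (∀ α β, α ≠ β → E α * E β = 0) ∧ (∑ α, E α = 1) ∧
      fidelity ρ0 ρ1 = ∑ α, Real.sqrt ((ρ0 * E α).trace.re * (ρ1 * E α).trace.re)) ∧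
    (∀ (k : ℕ) (E : Fin k → Matrix n n ℂ),
      (∀ α, (E α).PosSemidef) → (∑ α, E α = 1) →
      fidelity ρ0 ρ1 ≤ ∑ α, Real.sqrt ((ρ0 * E α).trace.re * (ρ1 * E α).trace.re)) := by
  obtain ⟨E, hE, hfid⟩ := exists_isPVM_fidelity_eq h0 h1
  have hE' := hE.comp_equiv (Fintype.equivFin n).symm
  refine ⟨⟨_, _, hE'.isHermitian, hE'.mul_self, hE'.mul_eq_zero, hE'.sum_eq_one, ?_⟩,
    fun _ _ hE hsum => fidelity_le_bhattacharyyaOverlap h0 h1 hE hsum⟩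
  rw [hfid, bhattacharyyaOverlap, ← Equiv.sum_comp (Fintype.equivFin n).symm]
  rfl

/-- The minimum over POVMs of the Bhattacharyya overlap equals the fidelity
and is attained by a projection valued measure. -/
theorem fidelity_eq_min_overlap_attained_by_pvm {n : Type*} [Fintype n] [DecidableEq n]
    (ρ0 ρ1 : Matrix n n ℂ) (h0 : ρ0.PosSemidef) (h0t : ρ0.trace = 1)
    (h1 : ρ1.PosSemidef) (h1t : ρ1.trace = 1) :
    (∃ (k : ℕ) (E : Fin k → Matrix n n ℂ),
      (∀ α, (E α)ᴴ = E α) ∧ (∀ α, E α * E α = E α) ∧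
      (∀ α β, α ≠ β → E α * E β = 0) ∧ (∑ α, E α = 1) ∧
      fidelity ρ0 ρ1 = ∑ α, Real.sqrt ((ρ0 * E α).trace.re * (ρ1 * E α).trace.re)) ∧
    (∀ (k : ℕ) (E : Fin k → Matrix n n ℂ),
      (∀ α, (E α).PosSemidef) → (∑ α, E α = 1) →
      fidelity ρ0 ρ1 ≤ ∑ α, Real.sqrt ((ρ0 * E α).trace.re * (ρ1 * E α).trace.re)) :=
  fidelity_eq_min_overlap_attained_by_pvm_general ρ0 ρ1 h0 h1
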